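/- Let r > 0 and a ∈ ℂ with 2a ≠ −3r. With b̃₁(z) = −z² − iza and b̃₂(z) = iz³ + 2izr², one has det [[b̃₁(ir), b̃₂(ir)],[∂_z b̃₁(ir), ∂_z b̃₂(ir)]] = −i r³ (2a + 3r) ≠ 0. -/

import Mathlib

open Complex

theorem hasDerivAt_neg_sq_sub_I_mul_mul (a z : ℂ) :
    HasDerivAt (fun z => -z ^ 2 - I * z * a) (-(2 * z) - I * a) z := by
  simpa [Pi.neg_def, Pi.sub_def] using (hasDerivAt_pow 2 z).neg.sub (((hasDerivAt_id z).const_mul I).mul_const a)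

theorem hasDerivAt_I_mul_cube_add_two_I_mul_mul (c z : ℂ) :
    HasDerivAt (fun z => I * z ^ 3 + 2 * I * z * c) (I * (3 * z ^ 2) + 2 * I * c) z := by
  simpa [Pi.add_def] using ((hasDerivAt_pow 3 z).const_mul I).add
    (((hasDerivAt_id z).const_mul (2 * I)).mul_const c)

theorem det_boundarySymbols_at_I_mul (a r : ℂ) :
    (-(I * r) ^ 2 - I * (I * r) * a) * (I * (3 * (I * r) ^ 2) + 2 * I * r ^ 2)
      - (I * (I * r) ^ 3 + 2 * I * (I * r) * r ^ 2) * (-(2 * (I * r)) - I * a)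
      = -I * r ^ 3 * (2 * a + 3 * r) := by
  linear_combination (-2 * a * r ^ 3 * I * (I ^ 2 - 1) - r ^ 4 * I * (I ^ 2 - 3)) * I_sq

theorem stmt_7 (r : ℝ) (hr : 0 < r) (a : ℂ) (ha : 2 * a ≠ -3 * (r : ℂ))
    (b₁ b₂ : ℂ → ℂ) (hb₁ : ∀ z, b₁ z = -z ^ 2 - Complex.I * z * a)
    (hb₂ : ∀ z, b₂ z = Complex.I * z ^ 3 + 2 * Complex.I * z * (r : ℂ) ^ 2) :
    Matrix.det !![b₁ (Complex.I * (r : ℂ)), b₂ (Complex.I * (r : ℂ));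
        deriv b₁ (Complex.I * (r : ℂ)), deriv b₂ (Complex.I * (r : ℂ))]
      = -Complex.I * (r : ℂ) ^ 3 * (2 * a + 3 * (r : ℂ)) ∧
    Matrix.det !![b₁ (Complex.I * (r : ℂ)), b₂ (Complex.I * (r : ℂ));
        deriv b₁ (Complex.I * (r : ℂ)), deriv b₂ (Complex.I * (r : ℂ))] ≠ 0 := by
  obtain rfl : b₁ = fun z => -z ^ 2 - I * z * a := funext hb₁
  obtain rfl : b₂ = fun z => I * z ^ 3 + 2 * I * z * (r : ℂ) ^ 2 := funext hb₂
  have hdet := det_boundarySymbols_at_I_mul a r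
  rw [Matrix.det_fin_two_of, (hasDerivAt_neg_sq_sub_I_mul_mul a _).deriv,
    (hasDerivAt_I_mul_cube_add_two_I_mul_mul _ _).deriv, hdet]
  refine ⟨rfl, mul_ne_zero (mul_ne_zero (neg_ne_zero.mpr I_ne_zero) ?_) ?_⟩
  · exact pow_ne_zero _ (ofReal_ne_zero.mpr hr.ne')
  · exact fun h => ha (by linear_combination h)
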